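/- Let A ∈ ℂ^{n×n}. The Fréchet derivative of the matrix exponential at A in direction E, i.e., the derivative of ε ↦ e^{A+εE} at ε = 0, equals ∫₀¹ e^{A(1−s)} E e^{As} ds. -/

import Mathlib

/-!
Duhamel's formula: `s ↦ exp ((1 - s) • A) * exp (s • B)` has derivative
`exp ((1 - s) • A) * (B - A) * exp (s • B)`, so integrating over `[0, 1]` gives
`exp B - exp A = ∫₀¹ exp ((1 - s) • A) * (B - A) * exp (s • B) ds`. With `B = A + ε • E` this
writes `exp (A + ε • E) - exp A = ε • g ε` for an integral `g ε` depending continuously on `ε`,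
and `g 0` is the claimed derivative.
-/

open NormedSpace

theorem hasDerivAt_of_sub_eq_smul {𝕜 F : Type*} [NontriviallyNormedField 𝕜]
    [NormedAddCommGroup F] [NormedSpace 𝕜 F] {f g : 𝕜 → F} {x : 𝕜}
    (hfg : ∀ y, f y - f x = (y - x) • g y) (hg : ContinuousAt g x) :
    HasDerivAt f (g x) x := by
  refine hasDerivAt_iff_tendsto_slope.mpr <| (hg.tendsto.mono_left nhdsWithin_le_nhds).congr' ?_
  filter_upwards [self_mem_nhdsWithin] with y (hy : y ≠ x)
  rw [slope_def_module, hfg, smul_smul, inv_mul_cancel₀ (sub_ne_zero.mpr hy), one_smul]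

section

variable {𝔸 : Type*} [NormedRing 𝔸] [NormedAlgebra ℝ 𝔸] [CompleteSpace 𝔸]

@[fun_prop]
theorem continuous_exp_of_normedAlgebra_real : Continuous (exp : 𝔸 → 𝔸) :=
  continuous_iff_continuousAt.2 fun x => (exp_analytic (𝕂 := ℝ) x).continuousAt

theorem hasDerivAt_exp_one_sub_smul_mul_exp_smul (A B : 𝔸) (s : ℝ) :
    HasDerivAt (fun s : ℝ => exp ((1 - s) • A) * exp (s • B))
      (exp ((1 - s) • A) * (B - A) * exp (s • B)) s := by
  have hA : HasDerivAt (fun s : ℝ => exp ((1 - s) • A)) (-(A * exp ((1 - s) • A))) s := by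
    simpa [Function.comp_def] using
      (hasDerivAt_exp_smul_const' A (1 - s)).scomp s ((hasDerivAt_id s).const_sub 1)
  have hcomm : A * exp ((1 - s) • A) = exp ((1 - s) • A) * A :=
    ((Commute.refl A).smul_right (1 - s)).exp_right.eq
  refine (hA.mul (hasDerivAt_exp_smul_const' B s)).congr_deriv ?_
  rw [hcomm]
  noncomm_ring

theorem exp_sub_exp_eq_integral (A B : 𝔸) :
    exp B - exp A = ∫ s in (0:ℝ)..1, exp ((1 - s) • A) * (B - A) * exp (s • B) := by
  have hcont : Continuous fun s : ℝ => exp ((1 - s) • A) * (B - A) * exp (s • B) := by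
    fun_prop
  rw [intervalIntegral.integral_eq_sub_of_hasDerivAt
    (fun s _ => hasDerivAt_exp_one_sub_smul_mul_exp_smul A B s) (hcont.intervalIntegrable 0 1)]
  simp

variable {𝕜 : Type*} [NontriviallyNormedField 𝕜] [NormedAlgebra 𝕜 𝔸] [SMulCommClass ℝ 𝕜 𝔸]

theorem hasDerivAt_exp_add_smul (A E : 𝔸) :
    HasDerivAt (fun ε : 𝕜 => exp (A + ε • E))
      (∫ s in (0:ℝ)..1, exp ((1 - s) • A) * E * exp (s • A)) 0 := by
  set g : 𝕜 → 𝔸 := fun ε => ∫ s in (0:ℝ)..1, exp ((1 - s) • A) * E * exp (s • (A + ε • E))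
  have hg : Continuous g :=
    intervalIntegral.continuous_parametric_intervalIntegral_of_continuous' (by fun_prop) 0 1
  have hexp : ∀ ε : 𝕜, exp (A + ε • E) - exp (A + (0:𝕜) • E) = (ε - 0) • g ε := by
    intro ε
    rw [zero_smul, add_zero, sub_zero, exp_sub_exp_eq_integral, ← intervalIntegral.integral_smul]
    refine intervalIntegral.integral_congr fun s _ => ?_
    simp only [add_sub_cancel_left, mul_smul_comm, smul_mul_assoc]
  simpa [g] using hasDerivAt_of_sub_eq_smul hexp hg.continuousAt

end

attribute [local instance] Matrix.frobeniusNormedAddCommGroup Matrix.frobeniusNormedSpace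
  Matrix.frobeniusNormedRing Matrix.frobeniusNormedAlgebra

/-- the derivative of `ε ↦ e^{A + εE}` at `ε = 0` equals
`∫₀¹ e^{A(1−s)} E e^{As} ds`. -/
theorem stmt13 {n : ℕ} (A E : Matrix (Fin n) (Fin n) ℂ) :
    HasDerivAt (fun ε : ℂ => NormedSpace.exp (A + ε • E))
      (∫ s in (0:ℝ)..1, NormedSpace.exp ((1 - s) • A) * E * NormedSpace.exp (s • A))
      0 :=
  hasDerivAt_exp_add_smul A E
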